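/- arXiv:1607.00798 — 2 statements merged into one kernel-verified Lean document; each statement's English description precedes it below -/
import Mathlib

section
/- If P \subset \mathbb{R}^d is a lattice polytope of size n (having n lattice points) and P has width W with respect to a functional \ell with \ell(P) = [0,W], and there exists a lattice point q in \ell^{-1}([0,W]) \setminus P, then there exists a lattice polytope P' of size n+1 and width exactly W with P \subsetneq P'. -/
open Set MeasureTheory

noncomputable section

/-- Cast an integer point to a real point. -/
def ratl {d : ℕ} (x : Fin d → ℤ) : Fin d → ℝ := fun i => (x i : ℝ)

/-- A lattice polytope: convex hull of finitely many integer points. -/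
def IsLatticePolytope {d : ℕ} (P : Set (Fin d → ℝ)) : Prop :=
  ∃ V : Finset (Fin d → ℤ), V.Nonempty ∧ P = convexHull ℝ (ratl '' ↑V)

/-- Width of a set with respect to an integer linear functional. -/
def widthF {d : ℕ} (P : Set (Fin d → ℝ)) (l : Fin d → ℤ) : ℝ :=
  sSup ((fun pq : (Fin d → ℝ) × (Fin d → ℝ) =>
    |∑ i, (l i : ℝ) * (pq.1 i - pq.2 i)|) '' (P ×ˢ P))

/-- Lattice width: min over nonzero integer functionals. -/
def latWidth {d : ℕ} (P : Set (Fin d → ℝ)) : ℝ :=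
  sInf (Set.range fun l : {l : Fin d → ℤ // l ≠ 0} => widthF P l.1)

/-- Number of lattice points of a set. -/
def latticeSize {d : ℕ} (P : Set (Fin d → ℝ)) : ℕ :=
  {x : Fin d → ℤ | ratl x ∈ P}.ncard

/-- Integer affine map, acting on real points. -/
def affMap {d : ℕ} (A : Matrix (Fin d) (Fin d) ℤ) (b : Fin d → ℤ) (x : Fin d → ℝ) :
    Fin d → ℝ :=
  (A.map (Int.cast : ℤ → ℝ)).mulVec x + ratl b

/-- Unimodular equivalence of subsets of ℝ^d. -/
def UnimodEquiv {d : ℕ} (P P' : Set (Fin d → ℝ)) : Prop :=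
  ∃ (A : Matrix (Fin d) (Fin d) ℤ) (b : Fin d → ℤ), IsUnit A.det ∧ affMap A b '' P = P'

/-- Projection forgetting the last coordinate. -/
def proj {d : ℕ} (x : Fin (d+1) → ℝ) : Fin d → ℝ := fun i => x i.castSucc

/-- Equivalence of lifts: a unimodular equivalence commuting with the projection. -/
def LiftEquiv {d : ℕ} (P₁ P₂ : Set (Fin (d+1) → ℝ)) : Prop :=
  ∃ (A : Matrix (Fin (d+1)) (Fin (d+1)) ℤ) (b : Fin (d+1) → ℤ), IsUnit A.det ∧
    affMap A b '' P₁ = P₂ ∧ ∀ x ∈ P₁, proj (affMap A b x) = proj x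

/-!
Let `K = conv (P ∪ {q})`; it lies in the slab `0 ≤ ℓ ≤ W`. Among the finitely many lattice
points of `K \ P` pick `q'` for which `P' = conv (P ∪ {q'})` has the fewest lattice points.
Another new lattice point `x` of `P'` would give `conv (P ∪ {x}) ⊊ P'`: if `q'` lay in
`conv (P ∪ {x})` the two hulls would coincide, their extreme points would lie in `P`, and
Krein–Milman would put `q'` in `P`. So `P'` has exactly one more lattice point than `P`. Its
width is at least that of `P ⊆ P'`, and at most `W` because `P'` stays in the slab.
-/
open Topology

lemma isClosedEmbedding_ratl {d : ℕ} : IsClosedEmbedding (ratl (d := d)) :=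
  .piMap fun _ => Int.isClosedEmbedding_coe_real

def latticePoints {d : ℕ} (S : Set (Fin d → ℝ)) : Set (Fin d → ℤ) := ratl ⁻¹' S

lemma latticeSize_eq_ncard_latticePoints {d : ℕ} (S : Set (Fin d → ℝ)) :
    latticeSize S = (latticePoints S).ncard :=
  rfl

lemma latticePoints_mono {d : ℕ} {S T : Set (Fin d → ℝ)} (h : S ⊆ T) :
    latticePoints S ⊆ latticePoints T :=
  preimage_mono h

lemma IsCompact.finite_latticePoints {d : ℕ} {K : Set (Fin d → ℝ)} (hK : IsCompact K) :
    (latticePoints K).Finite :=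
  (isClosedEmbedding_ratl.isCompact_preimage hK).finite_of_discrete

namespace IsLatticePolytope

variable {d : ℕ} {P : Set (Fin d → ℝ)}

lemma isCompact (hP : IsLatticePolytope P) : IsCompact P := by
  obtain ⟨V, -, rfl⟩ := hP
  exact (V.finite_toSet.image ratl).isCompact_convexHull ℝ

lemma convex (hP : IsLatticePolytope P) : Convex ℝ P := by
  obtain ⟨V, -, rfl⟩ := hP
  exact convex_convexHull ℝ _

lemma convexHull_insert (hP : IsLatticePolytope P) (x : Fin d → ℤ) :
    IsLatticePolytope (convexHull ℝ (insert (ratl x) P)) := by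
  obtain ⟨V, -, rfl⟩ := hP
  refine ⟨insert x V, V.insert_nonempty x, ?_⟩
  rw [Finset.coe_insert, image_insert_eq, ← singleton_union, ← singleton_union,
    convexHull_convexHull_union_right]

end IsLatticePolytope

lemma eq_of_convexHull_insert_eq {E : Type*} [AddCommGroup E] [Module ℝ E] [TopologicalSpace E]
    [T2Space E] [IsTopologicalAddGroup E] [ContinuousSMul ℝ E] [LocallyConvexSpace ℝ E]
    {P : Set E} {a b : E} (hP : IsClosed P) (hPc : Convex ℝ P)
    (hK : IsCompact (convexHull ℝ (insert a P))) (ha : a ∉ P)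
    (h : convexHull ℝ (insert a P) = convexHull ℝ (insert b P)) : a = b := by
  by_contra hab
  set K := convexHull ℝ (insert a P)
  have hext : K.extremePoints ℝ ⊆ P := fun x hx => by
    have hxa := extremePoints_convexHull_subset hx
    have hxb := extremePoints_convexHull_subset (h ▸ hx)
    rcases hxa with rfl | hxP
    · rcases hxb with rfl | hxP
      exacts [absurd rfl hab, hxP]
    · exact hxP
  have hKP : K ⊆ P := by
    rw [← closure_convexHull_extremePoints hK (convex_convexHull ℝ _)]
    exact closure_minimal (convexHull_min hext hPc) hP
  exact ha (hKP (subset_convexHull ℝ _ (mem_insert a P)))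

lemma exists_latticePoints_convexHull_insert_eq {d : ℕ} {P K : Set (Fin d → ℝ)}
    (hP : IsLatticePolytope P) (hK : IsCompact K) (hKc : Convex ℝ K) (hPK : P ⊆ K)
    {q : Fin d → ℤ} (hqK : ratl q ∈ K) (hqP : ratl q ∉ P) :
    ∃ q', ratl q' ∈ K ∧ ratl q' ∉ P ∧
      latticePoints (convexHull ℝ (insert (ratl q') P)) = insert q' (latticePoints P) := by
  set C : Set (Fin d → ℤ) := {x | ratl x ∈ K ∧ ratl x ∉ P}
  have hC : C.Finite := hK.finite_latticePoints.subset fun x hx => hx.1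
  obtain ⟨q', ⟨hq'K, hq'P⟩, hmin⟩ := exists_min_image C
    (fun x => (latticePoints (convexHull ℝ (insert (ratl x) P))).ncard) hC ⟨q, hqK, hqP⟩
  set P' := convexHull ℝ (insert (ratl q') P)
  have hPP' : P ⊆ P' := (subset_insert _ _).trans (subset_convexHull ℝ _)
  have hq'P' : ratl q' ∈ P' := subset_convexHull ℝ _ (mem_insert _ _)
  refine ⟨q', hq'K, hq'P, subset_antisymm (fun x hx => ?_)
    (insert_subset hq'P' (latticePoints_mono hPP'))⟩
  by_contra hxnew
  obtain ⟨hxq', hxP⟩ := not_or.1 hxnew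
  have hsub : convexHull ℝ (insert (ratl x) P) ⊆ P' :=
    convexHull_min (insert_subset hx hPP') (convex_convexHull ℝ _)
  have hq'x : ratl q' ∉ convexHull ℝ (insert (ratl x) P) := fun h =>
    hxq' <| isClosedEmbedding_ratl.injective <| Eq.symm <|
      eq_of_convexHull_insert_eq hP.isCompact.isClosed hP.convex
        (hP.convexHull_insert q').isCompact hq'P <|
        subset_antisymm (convexHull_min (insert_subset h ((subset_insert _ _).trans
          (subset_convexHull ℝ _))) (convex_convexHull ℝ _)) hsub
  have hlt :
      (latticePoints (convexHull ℝ (insert (ratl x) P))).ncard < (latticePoints P').ncard :=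
    ncard_lt_ncard ⟨latticePoints_mono hsub, fun h => hq'x (h hq'P')⟩
      (hP.convexHull_insert q').isCompact.finite_latticePoints
  have hP'K : P' ⊆ K := convexHull_min (insert_subset hq'K hPK) hKc
  exact (hmin x ⟨hP'K hx, hxP⟩).not_gt hlt

section Width

variable {d : ℕ}

lemma convex_preimage_sum_mul (l : Fin d → ℤ) {s : Set ℝ} (hs : Convex ℝ s) :
    Convex ℝ ((fun p : Fin d → ℝ => ∑ i, (l i : ℝ) * p i) ⁻¹' s) :=
  hs.is_linear_preimage
    { map_add := fun p r => by simp only [Pi.add_apply, mul_add, Finset.sum_add_distrib]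
      map_smul := fun c p => by
        simp only [Pi.smul_apply, smul_eq_mul, Finset.mul_sum, mul_left_comm] }

lemma widthF_nonneg (S : Set (Fin d → ℝ)) (l : Fin d → ℤ) : 0 ≤ widthF S l :=
  Real.sSup_nonneg (by rintro _ ⟨_, _, rfl⟩; exact abs_nonneg _)

lemma widthF_mono {S T : Set (Fin d → ℝ)} (hT : IsCompact T) (h : S ⊆ T) (l : Fin d → ℤ) :
    widthF S l ≤ widthF T l := by
  have hbdd := (hT.prod hT).bddAbove_image (f := fun pq : (Fin d → ℝ) × (Fin d → ℝ) =>
    |∑ i, (l i : ℝ) * (pq.1 i - pq.2 i)|) (by fun_prop)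
  exact Real.sSup_le (fun _ hy => le_csSup hbdd (image_mono (prod_mono h h) hy))
    (widthF_nonneg T l)

lemma widthF_le_of_mapsTo {S : Set (Fin d → ℝ)} {l : Fin d → ℤ} {a b : ℝ} (hab : a ≤ b)
    (h : MapsTo (fun p => ∑ i, (l i : ℝ) * p i) S (Icc a b)) : widthF S l ≤ b - a := by
  refine Real.sSup_le ?_ (sub_nonneg.2 hab)
  rintro _ ⟨⟨p, r⟩, ⟨hp, hr⟩, rfl⟩
  obtain ⟨hpa, hpb⟩ := h hp
  obtain ⟨hra, hrb⟩ := h hr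
  simp only [mul_sub, Finset.sum_sub_distrib] at hpa hpb hra hrb ⊢
  exact abs_sub_le_of_le_of_le hpa hpb hra hrb

lemma latWidth_le_widthF (S : Set (Fin d → ℝ)) {l : Fin d → ℤ} (hl : l ≠ 0) :
    latWidth S ≤ widthF S l :=
  csInf_le ⟨0, by rintro _ ⟨l, rfl⟩; exact widthF_nonneg S l⟩ ⟨⟨l, hl⟩, rfl⟩

lemma latWidth_mono {S T : Set (Fin d → ℝ)} (hT : IsCompact T) (h : S ⊆ T) :
    latWidth S ≤ latWidth T :=
  ciInf_mono ⟨0, by rintro _ ⟨l, rfl⟩; exact widthF_nonneg S l⟩ fun l => widthF_mono hT h l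

end Width

/-- A lattice polytope of size n and width W realized by ℓ with ℓ(P) = [0,W] can be
enlarged by one lattice point keeping the width. -/
theorem enlarge_by_one_point (d n W : ℕ) (P : Set (Fin d → ℝ)) (l : Fin d → ℤ)
    (hP : IsLatticePolytope P) (hsize : latticeSize P = n)
    (hl : l ≠ 0) (hwidth : latWidth P = (W : ℝ))
    (himg : (fun p => ∑ i, (l i : ℝ) * p i) '' P = Set.Icc (0 : ℝ) (W : ℝ))
    (q : Fin d → ℤ) (hq1 : (∑ i, (l i : ℝ) * (q i : ℝ)) ∈ Set.Icc (0 : ℝ) (W : ℝ))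
    (hq2 : ratl q ∉ P) :
    ∃ P' : Set (Fin d → ℝ), IsLatticePolytope P' ∧ latticeSize P' = n + 1 ∧
      latWidth P' = (W : ℝ) ∧ P ⊂ P' := by
  set K := convexHull ℝ (insert (ratl q) P)
  have hPK : P ⊆ K := (subset_insert _ _).trans (subset_convexHull ℝ _)
  obtain ⟨q', hq'K, hq'P, hpoints⟩ := exists_latticePoints_convexHull_insert_eq hP
    (hP.convexHull_insert q).isCompact (convex_convexHull ℝ _) hPK
    (subset_convexHull ℝ _ (mem_insert _ _)) hq2
  set P' := convexHull ℝ (insert (ratl q') P)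
  have hPP' : P ⊆ P' := (subset_insert _ _).trans (subset_convexHull ℝ _)
  have hKslab : MapsTo (fun p => ∑ i, (l i : ℝ) * p i) K (Icc 0 W) :=
    convexHull_min (insert_subset hq1 (image_subset_iff.1 himg.subset))
      (convex_preimage_sum_mul l (convex_Icc _ _))
  have hP'K : P' ⊆ K := convexHull_min (insert_subset hq'K hPK) (convex_convexHull ℝ _)
  refine ⟨P', hP.convexHull_insert q', ?_, le_antisymm ?_ ?_,
    (ssubset_iff_of_subset hPP').2 ⟨ratl q', subset_convexHull ℝ _ (mem_insert _ _), hq'P⟩⟩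
  · rw [latticeSize_eq_ncard_latticePoints, hpoints,
      ncard_insert_of_notMem (a := q') hq'P hP.isCompact.finite_latticePoints,
      ← latticeSize_eq_ncard_latticePoints, hsize]
  · calc latWidth P' ≤ widthF P' l := latWidth_le_widthF P' hl
      _ ≤ W - 0 := widthF_le_of_mapsTo W.cast_nonneg (hKslab.mono_left hP'K)
      _ = W := sub_zero _
  · exact hwidth ▸ latWidth_mono (hP.convexHull_insert q').isCompact hPP'
end
end

section
/- A lattice simplex has only finitely many equivalence classes of lifts of any bounded size: for every lattice simplex Q \subset \mathbb{R}^{d-1} and every n \in \mathbb{N}, there are only finitely many equivalence classes of lattice polytopes P \subset \mathbb{R}^d with at most n lattice points such that the projection forgetting the last coordinate maps P onto Q. -/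
open Set MeasureTheory

noncomputable section

/-!
Pick points `p i ∈ P` over the vertices `V i` of `Q`. Since the vertices are affinely
independent, the values `(⟨l, V i⟩ + c)ᵢ` of integral affine functions form a full-rank lattice in
`ℝ^(d+1)`, so some shear `(x, t) ↦ (x, t + ⟨l, x⟩ + c)` with `l, c` integral — a lift
equivalence — moves all heights of the `p i` into a range depending only on `Q`. The convex hull
of the sheared `p i` is then a section of the sheared `P` over `Q` of bounded height, and each
lattice point of the sheared `P` lies within `n` of it vertically, since the vertical segment
between them contains that many lattice points. So the vertices of the sheared `P` lie in a
fixed finite set of lattice points.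
-/

open Matrix

section LatticePoints

variable {d : ℕ}

lemma norm_ratl (z : Fin d → ℤ) : ‖ratl z‖ = ‖z‖ := by
  simp only [ratl, Pi.norm_def]
  congr! 2

lemma finite_setOf_ratl_mem {P : Set (Fin d → ℝ)} (hP : Bornology.IsBounded P) :
    {z : Fin d → ℤ | ratl z ∈ P}.Finite := by
  obtain ⟨R, hR⟩ := hP.exists_norm_le
  refine (isCompact_closedBall (0 : Fin d → ℤ) R).finite_of_discrete.subset fun z hz => ?_
  simpa [norm_ratl] using hR _ hz

lemma IsLatticePolytope.convex_s11 {P : Set (Fin d → ℝ)} (hP : IsLatticePolytope P) :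
    Convex ℝ P := by
  obtain ⟨W, -, rfl⟩ := hP
  exact convex_convexHull ℝ _

lemma IsLatticePolytope.finite_setOf_ratl_mem {P : Set (Fin d → ℝ)}
    (hP : IsLatticePolytope P) : {z : Fin d → ℤ | ratl z ∈ P}.Finite := by
  obtain ⟨W, -, rfl⟩ := hP
  exact _root_.finite_setOf_ratl_mem
    ((W.finite_toSet.image ratl).isCompact_convexHull (𝕜 := ℝ)).isBounded

lemma finite_setOf_isLatticePolytope_norm_le (R : ℝ) :
    {P : Set (Fin d → ℝ) | IsLatticePolytope P ∧ ∀ z, ratl z ∈ P → ‖ratl z‖ ≤ R}.Finite := by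
  have hF : {z : Fin d → ℤ | ‖ratl z‖ ≤ R}.Finite := by
    simpa using
      _root_.finite_setOf_ratl_mem (Metric.isBounded_closedBall (x := (0 : Fin d → ℝ)) (r := R))
  refine (hF.finite_subsets.image fun W => convexHull ℝ (ratl '' W)).subset ?_
  rintro _ ⟨⟨W, -, rfl⟩, hW⟩
  exact ⟨W, fun z hz => hW z (subset_convexHull ℝ _ ⟨z, hz, rfl⟩), rfl⟩

end LatticePoints

section IntegralAffineMaps

variable {d : ℕ}

lemma affMap_ratl (A : Matrix (Fin d) (Fin d) ℤ) (b z : Fin d → ℤ) :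
    affMap A b (ratl z) = ratl (A *ᵥ z + b) := by
  ext i
  simp [affMap, ratl, mulVec, dotProduct]

lemma affMap_eq (A : Matrix (Fin d) (Fin d) ℤ) (b : Fin d → ℤ) :
    affMap A b = ⇑((toLin' (A.map (Int.cast : ℤ → ℝ))).toAffineMap +
      AffineMap.const ℝ (Fin d → ℝ) (ratl b)) :=
  rfl

lemma IsLatticePolytope.image_affMap {P : Set (Fin d → ℝ)} (hP : IsLatticePolytope P)
    (A : Matrix (Fin d) (Fin d) ℤ) (b : Fin d → ℤ) : IsLatticePolytope (affMap A b '' P) := by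
  obtain ⟨W, hW, rfl⟩ := hP
  refine ⟨W.image (fun z => A *ᵥ z + b), hW.image _, ?_⟩
  rw [affMap_eq, AffineMap.image_convexHull, Finset.coe_image, ← Set.image_comp,
    ← Set.image_comp, ← affMap_eq]
  exact congrArg _ (Set.image_congr fun z _ => affMap_ratl A b z)

lemma latticeSize_image_affMap {A : Matrix (Fin d) (Fin d) ℤ} (hA : IsUnit A.det)
    (b : Fin d → ℤ) (P : Set (Fin d → ℝ)) : latticeSize (affMap A b '' P) = latticeSize P := by
  have hinj : Function.Injective (affMap A b) := by
    have : IsUnit (A.map (Int.cast : ℤ → ℝ)) := by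
      rw [isUnit_iff_isUnit_det]
      exact (RingHom.map_det (Int.castRingHom ℝ) A) ▸ hA.map (Int.castRingHom ℝ)
    exact fun x y hxy => mulVec_injective_iff_isUnit.mpr this (add_right_cancel hxy)
  set g : (Fin d → ℤ) → (Fin d → ℤ) := fun z => A *ᵥ z + b
  set g' : (Fin d → ℤ) → (Fin d → ℤ) := fun z => A⁻¹ *ᵥ (z - b)
  have hgg' : Function.RightInverse g' g := fun z => by
    simp [g, g', mulVec_mulVec, mul_nonsing_inv _ hA]
  have hg'g : Function.LeftInverse g' g := fun z => by
    simp [g, g', mulVec_mulVec, nonsing_inv_mul _ hA]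
  have himage : {z | ratl z ∈ affMap A b '' P} = g '' {z | ratl z ∈ P} := by
    ext z
    constructor
    · rintro ⟨x, hx, hxz⟩
      have : ratl (g' z) = x := hinj (by rw [affMap_ratl, hxz]; exact congrArg ratl (hgg' z))
      exact ⟨g' z, show ratl (g' z) ∈ P by rwa [this], hgg' z⟩
    · rintro ⟨z, hz, rfl⟩
      exact ⟨ratl z, hz, affMap_ratl A b z⟩
  unfold latticeSize
  rw [himage, Set.ncard_image_of_injective _ hg'g.injective]

end IntegralAffineMaps

section VerticalFibres

lemma Convex.update_preimage {ι : Type*} [DecidableEq ι] {s : Set (ι → ℝ)} (hs : Convex ℝ s)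
    (x : ι → ℝ) (i : ι) : Convex ℝ (Function.update x i ⁻¹' s) := by
  intro a ha b hb μ ν hμ hν hμν
  rw [Set.mem_preimage]
  convert hs ha hb hμ hν hμν using 1
  ext j
  rcases eq_or_ne j i with rfl | hj
  · simp
  · simp [Function.update_of_ne hj, ← add_mul, hμν]

lemma Set.OrdConnected.abs_sub_intCast_le {I : Set ℝ} (hI : I.OrdConnected)
    (hfin : {k : ℤ | (k : ℝ) ∈ I}.Finite) {n : ℕ} (hn : {k : ℤ | (k : ℝ) ∈ I}.ncard ≤ n)
    {y : ℤ} (hy : (y : ℝ) ∈ I) {h : ℝ} (hh : h ∈ I) : |h - y| ≤ n := by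
  have card_le : ∀ T : Finset ℤ, (∀ k ∈ T, (k : ℝ) ∈ I) → T.card ≤ n := fun T hT =>
    (Set.ncard_coe_finset T).symm.trans_le ((Set.ncard_le_ncard hT hfin).trans hn)
  rw [abs_le]
  constructor
  · by_contra! hlt
    have := card_le (Finset.Icc (y - n) y) fun k hk => by
      obtain ⟨hk₁, hk₂⟩ := Finset.mem_Icc.mp hk
      have : (y : ℝ) - n ≤ k := by exact_mod_cast hk₁
      exact hI.out hh hy ⟨by linarith, by exact_mod_cast hk₂⟩
    rw [Int.card_Icc] at this
    omega
  · by_contra! hlt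
    have := card_le (Finset.Icc y (y + n)) fun k hk => by
      obtain ⟨hk₁, hk₂⟩ := Finset.mem_Icc.mp hk
      have : (k : ℝ) ≤ y + n := by exact_mod_cast hk₂
      exact hI.out hy hh ⟨by exact_mod_cast hk₁, by linarith⟩
    rw [Int.card_Icc] at this
    omega

variable {d : ℕ}

lemma ratl_update (z : Fin d → ℤ) (i : Fin d) (k : ℤ) :
    ratl (Function.update z i k) = Function.update (ratl z) i (k : ℝ) := by
  ext j
  rcases eq_or_ne j i with rfl | hj <;> simp [ratl, Function.update_of_ne, *]

lemma update_last_eq_of_proj_eq {x y : Fin (d+1) → ℝ} (h : proj x = proj y) :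
    Function.update x (Fin.last d) (y (Fin.last d)) = y := by
  ext j
  induction j using Fin.lastCases with
  | last => simp
  | cast i => simpa [Function.update_of_ne (Fin.castSucc_lt_last i).ne, proj] using congrFun h i

/-- The vertical segment from `z` to `q` lies in `P` and contains more than `|q_d - z_d| - 1`
lattice points. -/
lemma abs_last_sub_le_latticeSize {P : Set (Fin (d+1) → ℝ)} (hconv : Convex ℝ P)
    (hfin : {z : Fin (d+1) → ℤ | ratl z ∈ P}.Finite) {z : Fin (d+1) → ℤ} (hz : ratl z ∈ P)
    {q : Fin (d+1) → ℝ} (hq : q ∈ P) (hqz : proj q = proj (ratl z)) :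
    |q (Fin.last d) - z (Fin.last d)| ≤ latticeSize P := by
  have hcol : {k : ℤ | (k : ℝ) ∈ Function.update (ratl z) (Fin.last d) ⁻¹' P} =
      Function.update z (Fin.last d) ⁻¹' {z | ratl z ∈ P} := by
    ext k
    simp [ratl_update]
  have hinj : Function.Injective (Function.update z (Fin.last d)) := Function.update_injective _ _
  refine (hconv.update_preimage (ratl z) (Fin.last d)).ordConnected.abs_sub_intCast_le
    ?_ ?_ ?_ ?_
  · rw [hcol]
    exact hfin.preimage hinj.injOn
  · rw [hcol]
    exact Set.ncard_le_ncard_of_injOn _ (fun k hk => hk) hinj.injOn hfin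
  · rwa [Set.mem_preimage, ← ratl_update, Function.update_eq_self]
  · simpa [update_last_eq_of_proj_eq hqz.symm] using hq

lemma exists_mem_proj_eq_abs_last_le {P : Set (Fin (d+1) → ℝ)} (hP : Convex ℝ P) {ι : Type*}
    {p : ι → Fin (d+1) → ℝ} (hpP : ∀ i, p i ∈ P)
    (hproj : proj '' P ⊆ convexHull ℝ (Set.range (proj ∘ p))) {r : ℝ}
    (hr : ∀ i, |p i (Fin.last d)| ≤ r) {x : Fin (d+1) → ℝ} (hx : x ∈ P) :
    ∃ q ∈ P, proj q = proj x ∧ |q (Fin.last d)| ≤ r := by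
  have hprojₗ : ⇑(LinearMap.funLeft ℝ ℝ (Fin.castSucc : Fin d → Fin (d+1))) = proj := rfl
  obtain ⟨q, hq, hqx⟩ : proj x ∈ proj '' convexHull ℝ (Set.range p) := by
    rw [← hprojₗ, LinearMap.image_convexHull, ← Set.range_comp, hprojₗ]
    exact hproj ⟨x, hx, rfl⟩
  have hheight : Convex ℝ {y : Fin (d+1) → ℝ | y (Fin.last d) ∈ Set.Icc (-r) r} :=
    (convex_Icc (-r) r).linear_preimage (LinearMap.proj (R := ℝ) (φ := fun _ => ℝ) (Fin.last d))
  have hq_height : q ∈ {y : Fin (d+1) → ℝ | y (Fin.last d) ∈ Set.Icc (-r) r} := by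
    refine convexHull_min ?_ hheight hq
    rintro _ ⟨i, rfl⟩
    exact abs_le.1 (hr i)
  exact ⟨q, convexHull_min (Set.range_subset_iff.2 hpP) hP hq, hqx, abs_le.2 hq_height⟩

lemma norm_ratl_le_of_forall_exists_abs_last_le {P : Set (Fin (d+1) → ℝ)}
    (hP : IsLatticePolytope P) {m r : ℝ} (hm : ∀ x ∈ P, ‖proj x‖ ≤ m)
    (hr : ∀ x ∈ P, ∃ q ∈ P, proj q = proj x ∧ |q (Fin.last d)| ≤ r) {z : Fin (d+1) → ℤ}
    (hz : ratl z ∈ P) : ‖ratl z‖ ≤ max m (r + latticeSize P) := by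
  obtain ⟨q, hqP, hqz, hq⟩ := hr _ hz
  have hvert := abs_last_sub_le_latticeSize hP.convex_s11 hP.finite_setOf_ratl_mem hz hqP hqz
  refine (pi_norm_le_iff_of_nonempty _).2 fun j => ?_
  induction j using Fin.lastCases with
  | last =>
    refine le_max_of_le_right ?_
    have := abs_sub_abs_le_abs_sub (z (Fin.last d) : ℝ) (q (Fin.last d))
    rw [abs_sub_comm] at this
    show |(z (Fin.last d) : ℝ)| ≤ r + latticeSize P
    linarith
  | cast i => exact le_max_of_le_left ((norm_le_pi_norm (proj (ratl z)) i).trans (hm _ hz))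

end VerticalFibres

section Shears

variable {d : ℕ}

def shearMatrix (w : Fin (d+1) → ℤ) : Matrix (Fin (d+1)) (Fin (d+1)) ℤ :=
  1 + vecMulVec (Pi.single (Fin.last d) 1) (Function.update w (Fin.last d) 0)

lemma det_shearMatrix (w : Fin (d+1) → ℤ) : (shearMatrix w).det = 1 := by
  rw [shearMatrix, vecMulVec_eq Unit, det_one_add_replicateCol_mul_replicateRow]
  simp

def shear (w : Fin (d+1) → ℤ) : (Fin (d+1) → ℝ) → Fin (d+1) → ℝ :=
  affMap (shearMatrix w) (Pi.single (Fin.last d) (w (Fin.last d)))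

lemma shear_apply (w : Fin (d+1) → ℤ) (x : Fin (d+1) → ℝ) :
    shear w x = Fin.snoc (proj x) (x (Fin.last d) + ratl w ⬝ᵥ Fin.snoc (proj x) 1) := by
  ext j
  induction j using Fin.lastCases with
  | last =>
    simp only [shear, affMap, shearMatrix, Pi.add_apply, mulVec, dotProduct, map_apply,
      Matrix.add_apply, one_apply, vecMulVec_apply, Pi.single_eq_same, one_mul, Int.cast_add,
      Int.cast_ite, Int.cast_one, Int.cast_zero, add_mul, ite_mul, zero_mul,
      Finset.sum_add_distrib, Finset.sum_ite_eq, Finset.mem_univ, ↓reduceIte,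
      Fin.sum_univ_castSucc, (Fin.castSucc_lt_last _).ne, ne_eq, not_false_eq_true,
      Function.update_of_ne, Function.update_self, add_zero, ratl, Fin.snoc_castSucc, proj,
      Fin.snoc_last, mul_one]
    ring
  | cast i =>
    simp [shear, affMap, shearMatrix, mulVec, dotProduct, vecMulVec_apply, one_apply, ratl, proj,
      (Fin.castSucc_lt_last i).ne]

lemma proj_shear (w : Fin (d+1) → ℤ) (x : Fin (d+1) → ℝ) : proj (shear w x) = proj x := by
  rw [shear_apply]
  exact Fin.init_snoc _ _

lemma shear_apply_last (w : Fin (d+1) → ℤ) (x : Fin (d+1) → ℝ) :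
    shear w x (Fin.last d) = x (Fin.last d) + ratl w ⬝ᵥ Fin.snoc (proj x) 1 := by
  rw [shear_apply, Fin.snoc_last]

lemma liftEquiv_image_shear (w : Fin (d+1) → ℤ) (P : Set (Fin (d+1) → ℝ)) :
    LiftEquiv P (shear w '' P) :=
  ⟨_, _, (det_shearMatrix w).symm ▸ isUnit_one, rfl, fun x _ => proj_shear w x⟩

lemma latticeSize_image_shear (w : Fin (d+1) → ℤ) (P : Set (Fin (d+1) → ℝ)) :
    latticeSize (shear w '' P) = latticeSize P :=
  latticeSize_image_affMap ((det_shearMatrix w).symm ▸ isUnit_one) _ P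

/-- Round a real solution of `M u = -h`; the error is `M` applied to a vector in `[0, 1)^ι`. -/
lemma exists_int_norm_add_mulVec_le {ι κ : Type*} [Fintype ι] [DecidableEq ι] [Fintype κ]
    (M : Matrix κ ι ℝ) (hM : Function.Surjective M.mulVec) :
    ∃ r, ∀ h : κ → ℝ, ∃ w : ι → ℤ, ‖h + M *ᵥ fun k => (w k : ℝ)‖ ≤ r := by
  set f := LinearMap.toContinuousLinearMap (toLin' M)
  refine ⟨‖f‖, fun h => ?_⟩
  obtain ⟨u, hu⟩ := hM (-h)
  refine ⟨fun k => ⌊u k⌋, ?_⟩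
  have hfract : h + M *ᵥ (fun k => (⌊u k⌋ : ℝ)) = -f fun k => Int.fract (u k) := by
    have : (fun k => Int.fract (u k)) = u - fun k => (⌊u k⌋ : ℝ) := rfl
    simp [f, this, mulVec_sub, hu, add_comm]
  have hnorm : ‖fun k => Int.fract (u k)‖ ≤ 1 :=
    (pi_norm_le_iff_of_nonneg zero_le_one).2 fun k => by
      rw [Real.norm_eq_abs, abs_of_nonneg (Int.fract_nonneg _)]
      exact (Int.fract_lt_one _).le
  calc ‖h + M *ᵥ (fun k => (⌊u k⌋ : ℝ))‖ = ‖f fun k => Int.fract (u k)‖ := by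
        rw [hfract, norm_neg]
    _ ≤ ‖f‖ * 1 := f.le_opNorm_of_le hnorm
    _ = ‖f‖ := mul_one _

lemma linearIndependent_snoc_one {ι : Type*} [Fintype ι] {p : ι → Fin d → ℝ}
    (hp : AffineIndependent ℝ p) :
    LinearIndependent ℝ fun i => (Fin.snoc (p i) 1 : Fin (d+1) → ℝ) := by
  rw [affineIndependent_iff_of_fintype] at hp
  rw [Fintype.linearIndependent_iff]
  intro g hg
  have hsum : ∑ i, g i = 0 := by simpa using congrFun hg (Fin.last d)
  refine hp g hsum ?_
  rw [Finset.weightedVSub_eq_linear_combination _ hsum]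
  ext j
  simpa using congrFun hg j.castSucc

lemma exists_shear_abs_last_le {V : Fin (d+1) → Fin d → ℤ}
    (hV : AffineIndependent ℝ fun i => ratl (V i)) :
    ∃ r, ∀ p : Fin (d+1) → Fin (d+1) → ℝ, (∀ i, proj (p i) = ratl (V i)) →
      ∃ w, ∀ i, |shear w (p i) (Fin.last d)| ≤ r := by
  set M : Matrix (Fin (d+1)) (Fin (d+1)) ℝ := Matrix.of fun i => Fin.snoc (ratl (V i)) 1
  have hM : Function.Surjective M.mulVec :=
    mulVec_surjective_iff_isUnit.2 (linearIndependent_rows_iff_isUnit.1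
      (linearIndependent_snoc_one hV))
  obtain ⟨r, hr⟩ := exists_int_norm_add_mulVec_le M hM
  refine ⟨r, fun p hp => ?_⟩
  obtain ⟨w, hw⟩ := hr fun i => p i (Fin.last d)
  refine ⟨w, fun i => ?_⟩
  rw [shear_apply_last, hp i, dotProduct_comm]
  exact (norm_le_pi_norm _ i).trans hw

end Shears

/-- A lattice simplex has only finitely many equivalence classes of lifts of bounded
size. -/
theorem simplex_finitely_many_lifts (d n : ℕ) (V : Fin (d+1) → (Fin d → ℤ))
    (hV : AffineIndependent ℝ (fun i => ratl (V i))) :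
    ∃ S : Set (Set (Fin (d+1) → ℝ)), S.Finite ∧
      ∀ P : Set (Fin (d+1) → ℝ), IsLatticePolytope P → latticeSize P ≤ n →
        proj '' P = convexHull ℝ (Set.range fun i => ratl (V i)) →
        ∃ P₀ ∈ S, LiftEquiv P P₀ := by
  obtain ⟨m, hm⟩ := ((Set.finite_range fun i => ratl (V i)).isCompact_convexHull
    (𝕜 := ℝ)).isBounded.exists_norm_le
  obtain ⟨r, hr⟩ := exists_shear_abs_last_le hV
  refine ⟨_, finite_setOf_isLatticePolytope_norm_le (max m (r + n)), fun P hP hsize hproj => ?_⟩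
  choose p hpP hpV using fun i => hproj.symm ▸ subset_convexHull ℝ _ (Set.mem_range_self i)
  obtain ⟨w, hw⟩ := hr p hpV
  have hP' : IsLatticePolytope (shear w '' P) := hP.image_affMap _ _
  have hproj' : proj '' (shear w '' P) = proj '' P := by
    simp only [Set.image_image, proj_shear]
  refine ⟨shear w '' P, ⟨hP', fun z hz => ?_⟩, liftEquiv_image_shear w P⟩
  have hbase : proj ∘ (fun i => shear w (p i)) = fun i => ratl (V i) :=
    funext fun i => (proj_shear w (p i)).trans (hpV i)
  have hsection := fun x hx => exists_mem_proj_eq_abs_last_le hP'.convex_s11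
    (fun i => Set.mem_image_of_mem (shear w) (hpP i)) (by rw [hproj', hproj, hbase]) hw (x := x) hx
  refine (norm_ratl_le_of_forall_exists_abs_last_le hP' (m := m)
    (fun x hx => hm _ (hproj ▸ hproj' ▸ Set.mem_image_of_mem proj hx)) hsection hz).trans ?_
  rw [latticeSize_image_shear]
  gcongr
end
end
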